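/- arXiv:1802.07122 — 3 statements merged into one kernel-verified Lean document; each statement's English description precedes it below -/
import Mathlib

section
/- Let m* = min_{1≤j≤d} p_j. If ρ satisfies −m*/(1−m*) ≤ ρ ≤ 1, then for all x,y ∈ ℕ^d with |x| = |y| = N, 1 + Σ_{n=1}^N ρ^n Q_n(x,y;N,p) ≥ 0. -/
open Finset

/-- Reproducing kernel polynomial `Q_n(x,y;N,p)` on the multinomial distribution. -/
noncomputable def kernelQ (d N : ℕ) (p : Fin d → ℝ) (n : ℕ) (x y : Fin d → ℕ) : ℝ :=
  ∑ z ∈ (Finset.Iic (x ⊓ y)).filter (fun z => ∑ i, z i ≤ n),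
    (N.choose (∑ i, z i) : ℝ) * ((N - ∑ i, z i).choose (n - ∑ i, z i) : ℝ) *
      (-1 : ℝ) ^ (n - ∑ i, z i) *
      (((∑ i, z i).factorial : ℝ) / ∏ i, ((z i).factorial : ℝ)) *
      (∏ i, ((x i).descFactorial (z i) : ℝ) * ((y i).descFactorial (z i) : ℝ) / (p i) ^ (z i)) /
      ((N.descFactorial (∑ i, z i) : ℝ)) ^ 2

/-!
Summing over `n` first, the binomial theorem collapses the kernel to
`∑_z ρ^|z| (1-ρ)^(N-|z|) (N-|z|)!/N! ∏ x_[z] y_[z] / (p^z z!)`, which is visibly nonnegative for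
`0 ≤ ρ ≤ 1`. For `ρ < 0`, pulling out `(1-ρ)^N / N!` leaves the permanent of an `N × N` matrix
whose entries are `1 + ρ / ((1-ρ) p_i)` between positions of equal colour `i` and `1` elsewhere.
The bound on `ρ` says exactly that these entries are nonnegative, and nonnegativity of the
permanent follows by induction on `N` from its expansion along a row.
-/

theorem single_one_le_iff {ι : Type*} [DecidableEq ι] {x : ι → ℕ} {c : ι} :
    Pi.single c 1 ≤ x ↔ 0 < x c := by
  refine ⟨fun h => (by simpa using h c : 1 ≤ x c), fun h i => ?_⟩
  rcases eq_or_ne i c with rfl | hi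
  · rw [Pi.single_eq_same]
    exact h
  · simp [Pi.single_eq_of_ne hi]

section Basic

variable {ι : Type*} [Fintype ι]

noncomputable def descProd (x z : ι → ℕ) : ℝ := ∏ i, ((x i).descFactorial (z i) : ℝ)

noncomputable def powDivFactorial (v : ι → ℝ) (z : ι → ℕ) : ℝ := ∏ i, v i ^ z i / (z i).factorial

theorem descProd_nonneg (x z : ι → ℕ) : 0 ≤ descProd x z :=
  prod_nonneg fun _ _ => Nat.cast_nonneg _

theorem descProd_eq_zero_of_not_le {x z : ι → ℕ} (h : ¬z ≤ x) : descProd x z = 0 := by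
  obtain ⟨i, hi⟩ := not_forall.1 (mt Pi.le_def.2 h)
  exact prod_eq_zero (mem_univ i) (by simp [Nat.descFactorial_eq_zero_iff_lt.2 (not_le.1 hi)])

theorem powDivFactorial_nonneg {v : ι → ℝ} (hv : ∀ i, 0 ≤ v i) (z : ι → ℕ) :
    0 ≤ powDivFactorial v z :=
  prod_nonneg fun i _ => div_nonneg (pow_nonneg (hv i) _) (Nat.cast_nonneg _)

theorem powDivFactorial_smul (a : ℝ) (v : ι → ℝ) (z : ι → ℕ) :
    powDivFactorial (a • v) z = a ^ (∑ i, z i) * powDivFactorial v z := by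
  simp only [powDivFactorial, ← prod_pow_eq_pow_sum, ← prod_mul_distrib, Pi.smul_apply,
    smul_eq_mul, mul_pow, mul_div_assoc]

variable [DecidableEq ι]

theorem mul_prod_eq_mul_prod_of_eq_of_ne {M : Type*} [CommMonoid M] {f g : ι → M} {a b : M}
    (c : ι) (hc : a * f c = b * g c) (hfg : ∀ i ≠ c, f i = g i) :
    a * ∏ i, f i = b * ∏ i, g i := by
  rw [← mul_prod_erase univ f (mem_univ c), ← mul_prod_erase univ g (mem_univ c),
    prod_congr rfl fun i hi => hfg i (ne_of_mem_erase hi), ← mul_assoc, hc, mul_assoc]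

theorem sum_add_single_one (z : ι → ℕ) (c : ι) :
    ∑ i, (z + Pi.single c 1 : ι → ℕ) i = ∑ i, z i + 1 := by
  simp [sum_add_distrib]

theorem sum_sub_single_one {x : ι → ℕ} {c : ι} (hc : 0 < x c) :
    ∑ i, (x - Pi.single c 1 : ι → ℕ) i = ∑ i, x i - 1 := by
  have := sum_add_single_one (x - Pi.single c 1) c
  rw [tsub_add_cancel_of_le (single_one_le_iff.2 hc)] at this
  omega

theorem descProd_sub_single_one {x z : ι → ℕ} {c : ι} (h : z c ≤ x c) :
    (x c : ℝ) * descProd (x - Pi.single c 1) z = ((x c : ℝ) - z c) * descProd x z := by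
  refine mul_prod_eq_mul_prod_of_eq_of_ne c ?_ fun i hi => by simp [Pi.single_eq_of_ne hi]
  rcases (x c).eq_zero_or_pos with hx | hx
  · simp [hx, show z c = 0 by omega]
  · obtain ⟨n, hn⟩ := Nat.exists_eq_add_one_of_ne_zero hx.ne'
    simp only [Pi.sub_apply, Pi.single_eq_same, hn, Nat.add_sub_cancel]
    rw [← Nat.cast_sub (hn ▸ h)]
    exact_mod_cast (Nat.succ_descFactorial n (z c)).symm

theorem descProd_add_single_one {x : ι → ℕ} (z : ι → ℕ) {c : ι} (hc : 0 < x c) :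
    descProd x (z + Pi.single c 1) = x c * descProd (x - Pi.single c 1) z := by
  rw [← one_mul (descProd x _)]
  refine mul_prod_eq_mul_prod_of_eq_of_ne c ?_ fun i hi => by simp [Pi.single_eq_of_ne hi]
  obtain ⟨n, hn⟩ := Nat.exists_eq_add_one_of_ne_zero hc.ne'
  simp only [Pi.add_apply, Pi.sub_apply, Pi.single_eq_same, hn, Nat.add_sub_cancel, one_mul]
  exact_mod_cast Nat.succ_descFactorial_succ n (z c)

theorem powDivFactorial_add_single_one (v : ι → ℝ) (z : ι → ℕ) (c : ι) :
    ((z c : ℝ) + 1) * powDivFactorial v (z + Pi.single c 1) = v c * powDivFactorial v z := by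
  refine mul_prod_eq_mul_prod_of_eq_of_ne c ?_ fun i hi => by simp [Pi.single_eq_of_ne hi]
  have : ((z c).factorial : ℝ) ≠ 0 := by positivity
  simp only [Pi.add_apply, Pi.single_eq_same, Nat.factorial_succ, pow_succ]
  push_cast
  field_simp

end Basic

section ColourPermanent

variable {ι : Type*} [Fintype ι] [DecidableEq ι]

theorem sum_Iic_sub_single_one {M : Type*} [AddCommMonoid M] {a : ι → ℕ} {c : ι} (ha : 0 < a c)
    (f : (ι → ℕ) → M) :
    ∑ w ∈ Iic (a - Pi.single c 1), f (w + Pi.single c 1) = ∑ z ∈ Iic a with 0 < z c, f z := by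
  have hle : Pi.single c 1 ≤ a := single_one_le_iff.2 ha
  refine sum_nbij' (· + Pi.single c 1) (· - Pi.single c 1) (fun w hw => ?_) (fun z hz => ?_)
    (fun w _ => add_tsub_cancel_right _ _) (fun z hz => ?_) fun _ _ => rfl
  · rw [mem_Iic, le_tsub_iff_right hle] at hw
    simp [hw]
  · exact mem_Iic.2 (tsub_le_tsub_right (mem_Iic.1 (mem_filter.1 hz).1) _)
  · exact tsub_add_cancel_of_le (single_one_le_iff.2 (mem_filter.1 hz).2)

/-- If `a, b : Fin n → ι` are colourings with colour counts `x` and `y`, this is the permanent of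
the `n × n` matrix with entries `1 + v (a k)` where `a k = b l` and `1` elsewhere: `z` records
how many same-colour pairs of the expansion pick up the factor `v`. -/
noncomputable def colourPermanent (x y : ι → ℕ) (v : ι → ℝ) : ℝ :=
  ∑ z ∈ Iic (x ⊓ y), ((∑ i, x i - ∑ i, z i).factorial : ℝ) *
    (descProd x z * descProd y z * powDivFactorial v z)

theorem colourPermanent_of_sum_eq_zero {x : ι → ℕ} (y : ι → ℕ) (v : ι → ℝ)
    (hx : ∑ i, x i = 0) : colourPermanent x y v = 1 := by
  obtain rfl : x = 0 := funext fun i => sum_eq_zero_iff.1 hx i (mem_univ i)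
  have : Iic (0 : ι → ℕ) = {0} := by ext z; simp [nonpos_iff_eq_zero]
  simp [colourPermanent, this, descProd, powDivFactorial]

theorem cast_mul_cast_mul_colourPermanent_sub_single_one {X Y : ι → ℕ} (v : ι → ℝ) {c : ι}
    (j : ι) (hc : 0 < X c) :
    (X c : ℝ) * Y j * colourPermanent (X - Pi.single c 1) (Y - Pi.single j 1) v =
      ∑ z ∈ Iic (X ⊓ Y), ((∑ i, X i - 1 - ∑ i, z i).factorial : ℝ) *
        (((X c : ℝ) - z c) * ((Y j : ℝ) - z j) *
          (descProd X z * descProd Y z * powDivFactorial v z)) := by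
  rw [colourPermanent, sum_sub_single_one hc, mul_sum]
  refine (sum_subset (Iic_subset_Iic.2 (inf_le_inf tsub_le_self tsub_le_self))
    fun z _ hz => ?_).trans (sum_congr rfl fun z hz => ?_)
  · rw [mem_Iic, le_inf_iff, not_and_or] at hz
    rcases hz with h | h <;> simp [descProd_eq_zero_of_not_le h]
  · rw [mem_Iic, le_inf_iff] at hz
    calc _ = ((∑ i, X i - 1 - ∑ i, z i).factorial : ℝ) *
          ((X c * descProd (X - Pi.single c 1) z) * (Y j * descProd (Y - Pi.single j 1) z) *
            powDivFactorial v z) := by ring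
      _ = _ := by rw [descProd_sub_single_one (hz.1 c), descProd_sub_single_one (hz.2 j)]; ring

theorem mul_cast_mul_cast_mul_colourPermanent_sub_single_one_self {X Y : ι → ℕ} (v : ι → ℝ)
    {c : ι} (hX : 0 < X c) :
    v c * (X c * Y c * colourPermanent (X - Pi.single c 1) (Y - Pi.single c 1) v) =
      ∑ z ∈ Iic (X ⊓ Y), ((∑ i, X i - ∑ i, z i).factorial : ℝ) *
        (z c * (descProd X z * descProd Y z * powDivFactorial v z)) := by
  rcases (Y c).eq_zero_or_pos with hY | hY
  · have hz : ∀ z ∈ Iic (X ⊓ Y), z c = 0 := fun z hz =>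
      Nat.eq_zero_of_le_zero (hY ▸ (mem_Iic.1 hz c).trans inf_le_right)
    rw [sum_eq_zero fun z hz' => by simp [hz z hz']]
    simp [hY]
  have hXY : 0 < (X ⊓ Y) c := lt_min hX hY
  have hinf : X ⊓ Y - Pi.single c 1 = (X - Pi.single c 1) ⊓ (Y - Pi.single c 1) :=
    funext fun i => (Nat.sub_min_sub_right _ _ _).symm
  -- the terms with `z c = 0` vanish, the others are the shifts `w + Pi.single c 1`
  rw [← sum_filter_of_ne (p := fun z => 0 < z c) fun z _ h =>
      Nat.pos_of_ne_zero fun hz => h (by simp [hz]),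
    ← sum_Iic_sub_single_one hXY, hinf, colourPermanent, sum_sub_single_one hX, mul_sum, mul_sum]
  refine sum_congr rfl fun w _ => ?_
  rw [sum_add_single_one, descProd_add_single_one w hX, descProd_add_single_one w hY,
    show ∑ i, X i - (∑ i, w i + 1) = ∑ i, X i - 1 - ∑ i, w i by omega]
  have hW := powDivFactorial_add_single_one v w c
  push_cast [Pi.add_apply, Pi.single_eq_same]
  linear_combination (-(((∑ i, X i - 1 - ∑ i, w i).factorial : ℝ) * X c * Y c *
    descProd (X - Pi.single c 1) w * descProd (Y - Pi.single c 1) w)) * hW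

/-- Expansion of the permanent along a row of colour `c`. -/
theorem colourPermanent_eq_sum_sub_single_one {X Y : ι → ℕ} (v : ι → ℝ) {c : ι}
    (hc : 0 < X c) (hXY : ∑ i, X i = ∑ i, Y i) :
    colourPermanent X Y v = ∑ j, Y j * (1 + if j = c then v c else 0) *
      colourPermanent (X - Pi.single c 1) (Y - Pi.single j 1) v := by
  refine mul_left_cancel₀ (Nat.cast_ne_zero.2 hc.ne' : (X c : ℝ) ≠ 0) ?_
  have hsplit : (X c : ℝ) * ∑ j, Y j * (1 + if j = c then v c else 0) *
      colourPermanent (X - Pi.single c 1) (Y - Pi.single j 1) v =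
      ∑ j, (X c : ℝ) * Y j * colourPermanent (X - Pi.single c 1) (Y - Pi.single j 1) v +
        v c * (X c * Y c * colourPermanent (X - Pi.single c 1) (Y - Pi.single c 1) v) := by
    simp only [mul_sum, mul_add, add_mul, mul_one, sum_add_distrib, mul_ite,
      ite_mul, mul_zero, zero_mul, sum_ite_eq', mem_univ, if_true, mul_assoc]
    ring
  rw [hsplit, mul_cast_mul_cast_mul_colourPermanent_sub_single_one_self v hc,
    sum_congr rfl fun j _ => cast_mul_cast_mul_colourPermanent_sub_single_one v j hc, sum_comm,
    colourPermanent, mul_sum, ← sum_add_distrib]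
  -- termwise, with `S = ∑ X = ∑ Y` and `k = ∑ z`:
  -- `X c (S-k)! = (S-1-k)! (X c - z c) ∑ j (Y j - z j) + (S-k)! z c`
  refine sum_congr rfl fun z hz => ?_
  have hzX : z ≤ X := (mem_Iic.1 hz).trans inf_le_left
  have hk : ∑ i, z i ≤ ∑ i, X i := sum_le_sum fun i _ => hzX i
  have hYz : ∑ j, ((Y j : ℝ) - z j) = (∑ i, X i : ℕ) - (∑ i, z i : ℕ) := by
    rw [sum_sub_distrib, hXY]
    push_cast
    rfl
  simp only [← mul_assoc, ← sum_mul]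
  simp only [mul_assoc, ← mul_sum, hYz]
  rcases hk.lt_or_eq with hlt | heq
  · obtain ⟨m, hm⟩ := Nat.exists_eq_add_one_of_ne_zero (Nat.sub_ne_zero_of_lt hlt)
    have hS : ((∑ i, X i : ℕ) : ℝ) - (∑ i, z i : ℕ) = m + 1 := by
      rw [← Nat.cast_sub hk, hm]
      push_cast
      rfl
    rw [hm, show ∑ i, X i - 1 - ∑ i, z i = m by omega, hS, Nat.factorial_succ]
    push_cast
    ring
  · obtain rfl : z = X := funext fun i =>
      (sum_eq_sum_iff_of_le fun i _ => hzX i).1 heq i (mem_univ i)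
    simp

theorem colourPermanent_nonneg {v : ι → ℝ} (hv : ∀ i, -1 ≤ v i) {X Y : ι → ℕ}
    (hXY : ∑ i, X i = ∑ i, Y i) : 0 ≤ colourPermanent X Y v := by
  induction hn : ∑ i, X i generalizing X Y with
  | zero => exact (colourPermanent_of_sum_eq_zero Y v hn).symm ▸ zero_le_one
  | succ n ih =>
    obtain ⟨c, hc⟩ : ∃ c, 0 < X c := by
      by_contra! h
      simp [fun i => Nat.le_zero.1 (h i)] at hn
    rw [colourPermanent_eq_sum_sub_single_one v hc hXY]
    refine sum_nonneg fun j _ => ?_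
    rcases (Y j).eq_zero_or_pos with hj | hj
    · simp [hj]
    have hentry : 0 ≤ 1 + if j = c then v c else 0 := by
      split_ifs <;> linarith [hv c]
    have hX' := sum_sub_single_one hc
    have hY' := sum_sub_single_one hj
    exact mul_nonneg (mul_nonneg (Nat.cast_nonneg _) hentry) (ih (by omega) (by omega))

end ColourPermanent

theorem sum_Icc_pow_mul_choose_sub_mul_neg_one_pow (ρ : ℝ) {k N : ℕ} (hk : k ≤ N) :
    ∑ n ∈ Icc k N, ρ ^ n * ((N - k).choose (n - k) : ℝ) * (-1) ^ (n - k) =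
      ρ ^ k * (1 - ρ) ^ (N - k) := by
  rw [← Ico_add_one_right_eq_Icc, sum_Ico_eq_sum_range, show N + 1 - k = N - k + 1 by omega,
    show 1 - ρ = -ρ + 1 by ring, add_pow, mul_sum]
  refine sum_congr rfl fun m _ => ?_
  rw [Nat.add_sub_cancel_left, pow_add, neg_pow]
  ring

theorem choose_mul_factorial_div_descFactorial_sq {k N : ℕ} (hk : k ≤ N) :
    (N.choose k : ℝ) * k.factorial / (N.descFactorial k : ℝ) ^ 2 =
      (N - k).factorial / N.factorial := by
  have hD : (N.descFactorial k : ℝ) ≠ 0 := by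
    exact_mod_cast (Nat.descFactorial_pos.2 hk).ne'
  rw [div_eq_div_iff (pow_ne_zero 2 hD) (by positivity), Nat.descFactorial_eq_factorial_mul_choose,
    ← Nat.choose_mul_factorial_mul_factorial hk]
  push_cast
  ring

theorem prod_descFactorial_mul_div_pow_div_prod_factorial {ι : Type*} [Fintype ι]
    (x y z : ι → ℕ) (p : ι → ℝ) :
    (∏ i, ((x i).descFactorial (z i) : ℝ) * (y i).descFactorial (z i) / p i ^ z i) /
        ∏ i, ((z i).factorial : ℝ) =
      descProd x z * descProd y z * powDivFactorial p⁻¹ z := by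
  simp only [descProd, powDivFactorial, ← prod_mul_distrib, ← prod_div_distrib, Pi.inv_apply,
    inv_pow]
  exact prod_congr rfl fun i _ => by ring

theorem kernelQ_zero (d N : ℕ) (p : Fin d → ℝ) (x y : Fin d → ℕ) : kernelQ d N p 0 x y = 1 := by
  have : (Iic (x ⊓ y)).filter (fun z => ∑ i, z i ≤ 0) = {0} := by
    ext z
    simp only [mem_filter, mem_Iic, mem_singleton, Nat.le_zero, sum_eq_zero_iff, mem_univ,
      true_implies]
    exact ⟨fun h => funext h.2, fun h => ⟨h ▸ zero_le, fun i => congrFun h i⟩⟩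
  rw [kernelQ, this]
  simp

theorem one_add_sum_pow_mul_kernelQ {d N : ℕ} (p : Fin d → ℝ) (ρ : ℝ) {x : Fin d → ℕ}
    (y : Fin d → ℕ) (hx : ∑ i, x i = N) :
    1 + ∑ n ∈ Icc 1 N, ρ ^ n * kernelQ d N p n x y =
      ∑ z ∈ Iic (x ⊓ y), ρ ^ (∑ i, z i) * (1 - ρ) ^ (N - ∑ i, z i) *
        ((N - ∑ i, z i).factorial / N.factorial) *
          (descProd x z * descProd y z * powDivFactorial p⁻¹ z) := by
  have hIcc : 1 + ∑ n ∈ Icc 1 N, ρ ^ n * kernelQ d N p n x y =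
      ∑ n ∈ Icc 0 N, ρ ^ n * kernelQ d N p n x y := by
    rw [Icc_eq_cons_Ioc (Nat.zero_le N), sum_cons, ← Icc_add_one_left_eq_Ioc, pow_zero,
      kernelQ_zero, one_mul]
    rfl
  rw [hIcc]
  simp only [kernelQ, mul_sum]
  rw [sum_comm' (t' := Iic (x ⊓ y)) (s' := fun z => Icc (∑ i, z i) N) fun n z => by
    simp only [mem_Icc, mem_filter, zero_le, true_and]
    tauto]
  refine sum_congr rfl fun z hz => ?_
  have hk : ∑ i, z i ≤ N := hx ▸ sum_le_sum fun i _ => (mem_Iic.1 hz).trans inf_le_left i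
  rw [← prod_descFactorial_mul_div_pow_div_prod_factorial,
    ← choose_mul_factorial_div_descFactorial_sq hk, ← sum_Icc_pow_mul_choose_sub_mul_neg_one_pow ρ hk, sum_mul, sum_mul]
  exact sum_congr rfl fun n _ => by ring

theorem one_add_sum_pow_mul_kernelQ_eq_colourPermanent {d N : ℕ} (p : Fin d → ℝ) {ρ : ℝ}
    (hρ : ρ ≠ 1) {x : Fin d → ℕ} (y : Fin d → ℕ) (hx : ∑ i, x i = N) :
    1 + ∑ n ∈ Icc 1 N, ρ ^ n * kernelQ d N p n x y =
      (1 - ρ) ^ N / N.factorial * colourPermanent x y ((ρ / (1 - ρ)) • p⁻¹) := by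
  have h1ρ : 1 - ρ ≠ 0 := sub_ne_zero.2 hρ.symm
  rw [one_add_sum_pow_mul_kernelQ p ρ y hx, colourPermanent, hx, mul_sum]
  refine sum_congr rfl fun z hz => ?_
  have hk : ∑ i, z i ≤ N := hx ▸ sum_le_sum fun i _ => (mem_Iic.1 hz).trans inf_le_left i
  rw [powDivFactorial_smul, div_pow, ← pow_sub_mul_pow (1 - ρ) hk]
  field_simp

theorem neg_one_le_div_one_sub_mul_inv {m q ρ : ℝ} (hm : 0 < m) (hmq : m ≤ q)
    (hρm : -(m / (1 - m)) ≤ ρ) (hρ : ρ < 0) : -1 ≤ ρ / (1 - ρ) * q⁻¹ := by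
  have hm1 : m < 1 := by
    by_contra! h
    have : m / (1 - m) ≤ 0 := div_nonpos_of_nonneg_of_nonpos hm.le (by linarith)
    linarith
  have hm' : -ρ * (1 - m) ≤ m := (le_div_iff₀ (sub_pos.2 hm1)).1 (neg_le.1 hρm)
  rw [← div_eq_mul_inv, div_div, le_div_iff₀ (mul_pos (by linarith) (hm.trans_le hmq))]
  nlinarith [mul_nonneg (sub_nonneg.2 hmq) (sub_nonneg.2 (hρ.le.trans zero_le_one))]

theorem poisson_kernel_nonneg_general (d : ℕ) (p : Fin d → ℝ)
    (hp : ∀ j, 0 < p j) (N : ℕ)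
    (mstar : ℝ) (hmstar : IsLeast (Set.range p) mstar)
    (ρ : ℝ) (hρl : -(mstar / (1 - mstar)) ≤ ρ) (hρu : ρ ≤ 1)
    (x y : Fin d → ℕ) (hx : ∑ i, x i = N) (hy : ∑ i, y i = N) :
    0 ≤ 1 + ∑ n ∈ Finset.Icc 1 N, ρ ^ n * kernelQ d N p n x y := by
  rcases le_or_gt 0 ρ with hρ0 | hρ0
  · rw [one_add_sum_pow_mul_kernelQ p ρ y hx]
    refine sum_nonneg fun z _ => mul_nonneg (by bound) ?_
    exact mul_nonneg (mul_nonneg (descProd_nonneg x z) (descProd_nonneg y z))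
      (powDivFactorial_nonneg (fun i => (inv_pos.2 (hp i)).le) z)
  · rw [one_add_sum_pow_mul_kernelQ_eq_colourPermanent p (by linarith) y hx]
    refine mul_nonneg (by bound) (colourPermanent_nonneg (fun i => ?_) (hx.trans hy.symm))
    obtain ⟨j, rfl⟩ := hmstar.1
    exact neg_one_le_div_one_sub_mul_inv (hp j) (hmstar.2 ⟨i, rfl⟩) hρl hρ0

/-- Nonnegativity of the Poisson kernel `1 + Σ_{n=1}^N ρ^n Q_n(x,y;N,p)` for
`-m*/(1-m*) ≤ ρ ≤ 1`, where `m* = min_j p_j`. -/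
theorem poisson_kernel_nonneg (d : ℕ) (hd : 2 ≤ d) (p : Fin d → ℝ)
    (hp : ∀ j, 0 < p j) (hsum : ∑ j, p j = 1) (N : ℕ) (hN : 0 < N)
    (mstar : ℝ) (hmstar : IsLeast (Set.range p) mstar)
    (ρ : ℝ) (hρl : -(mstar / (1 - mstar)) ≤ ρ) (hρu : ρ ≤ 1)
    (x y : Fin d → ℕ) (hx : ∑ i, x i = N) (hy : ∑ i, y i = N) :
    0 ≤ 1 + ∑ n ∈ Finset.Icc 1 N, ρ ^ n * kernelQ d N p n x y :=
  poisson_kernel_nonneg_general d p hp N mstar hmstar ρ hρl hρu x y hx hy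
end

section
/- Let σ : {1,…,d} → {1,…,d′} be a surjection with 2 ≤ d′ < d, and define the grouped probability vector p′ ∈ (0,1)^{d′} by p′_k = Σ_{j: σ(j)=k} p_j and, for x ∈ ℕ^d, the grouped vector x^σ ∈ ℕ^{d′} by (x^σ)_k = Σ_{j: σ(j)=k} x_j. Then for all a, b ∈ ℕ^{d′} with |a| = |b| = N and every 0 ≤ n ≤ N, Σ_{x,y∈ℕ^d: |x|=|y|=N, x^σ = a, y^σ = b} m(x;N,p) m(y;N,p) Q_n(x,y;N,p) = m(a;N,p′) m(b;N,p′) Q_n(a,b;N,p′); that is, the conditional expectation of Q_n(X,Y;N,p) given the grouped counts equals the reproducing kernel polynomial of the grouped multinomial. -/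
/-!
Expanding `Q_n(x,y) = ∑_z κ_{|z|} x_{[z]} y_{[z]} / (z! p^z)`, with coefficients that depend on
`z` only through `|z|`, the left side becomes a sum over `z` of products of conditional factorial
moments `∑_{x^σ = a} m(x) x_{[z]}`. Writing `x = w + z` and applying the multinomial theorem
inside each group `σ⁻¹(k)` gives `∑_{x^σ = a} m(x) x_{[z]} = m(a; p') a_{[z^σ]} p^z / p'^{z^σ}`,
so apart from `p^z` the `z`-term depends only on `s = z^σ`. Summing `p^z / z!` over the `z` with
`z^σ = s` gives `p'^s / s!`, by the multinomial theorem once more, and what is left is exactly the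
`s`-term of `Q_n(a,b;p')`.
-/

open Finset

/-- The finite set of configurations of `N` balls in `d` boxes. -/
noncomputable def multiSupp (d N : ℕ) : Finset (Fin d → ℕ) :=
  (Finset.Iic (fun _ => N)).filter (fun x => ∑ i, x i = N)

/-- Multinomial probability `m(x;N,p)`. -/
noncomputable def mProb (d N : ℕ) (p : Fin d → ℝ) (x : Fin d → ℕ) : ℝ :=
  ((N.factorial : ℝ) / ∏ i, ((x i).factorial : ℝ)) * ∏ i, (p i) ^ (x i)

open scoped Nat

section Grouping

variable {ι κ : Type*} [Fintype ι] [DecidableEq κ]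

/-- The grouped vector `x^σ` of the paper. -/
def fiberSum {M : Type*} [AddCommMonoid M] (σ : ι → κ) (x : ι → M) : κ → M :=
  fun k => ∑ j ∈ univ.filter (fun j => σ j = k), x j

lemma sum_fiberSum [Fintype κ] {M : Type*} [AddCommMonoid M] (σ : ι → κ) (x : ι → M) :
    ∑ k, fiberSum σ x k = ∑ j, x j :=
  sum_fiberwise univ σ x

lemma le_fiberSum_apply (σ : ι → κ) (x : ι → ℕ) (j : ι) : x j ≤ fiberSum σ x (σ j) :=
  single_le_sum (f := x) (fun _ _ => Nat.zero_le _) (mem_filter.2 ⟨mem_univ j, rfl⟩)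

lemma fiberSum_add {M : Type*} [AddCommMonoid M] (σ : ι → κ) (x y : ι → M) :
    fiberSum σ (x + y) = fiberSum σ x + fiberSum σ y :=
  funext fun _ => sum_add_distrib

lemma fiberSum_tsub (σ : ι → κ) {x z : ι → ℕ} (h : z ≤ x) :
    fiberSum σ (x - z) = fiberSum σ x - fiberSum σ z :=
  funext fun _ => sum_tsub_distrib _ fun j _ => h j

lemma fiberSum_mono (σ : ι → κ) : Monotone (fiberSum σ : (ι → ℕ) → κ → ℕ) :=
  fun _ _ h _ => sum_le_sum fun j _ => h j

variable [DecidableEq ι] [Fintype κ]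

/-- The bound `w ≤ c ∘ σ` is automatic; it only makes the set finite. -/
def fiberFinset (σ : ι → κ) (c : κ → ℕ) : Finset (ι → ℕ) :=
  (Iic fun j => c (σ j)).filter (fun w => fiberSum σ w = c)

@[simp]
lemma mem_fiberFinset {σ : ι → κ} {c : κ → ℕ} {w : ι → ℕ} :
    w ∈ fiberFinset σ c ↔ fiberSum σ w = c := by
  refine mem_filter.trans ⟨And.right, fun h => ⟨mem_Iic.2 fun j => ?_, h⟩⟩
  exact h ▸ le_fiberSum_apply σ w j

end Grouping

noncomputable def expWeight {ι : Type*} [Fintype ι] (q : ι → ℝ) (x : ι → ℕ) : ℝ :=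
  ∏ i, q i ^ x i / (x i)!

lemma expWeight_eq_div {ι : Type*} [Fintype ι] (q : ι → ℝ) (x : ι → ℕ) :
    expWeight q x = (∏ i, q i ^ x i) / ∏ i, ((x i)! : ℝ) :=
  prod_div_distrib _ _

lemma mProb_eq_factorial_mul_expWeight {d : ℕ} (N : ℕ) (p : Fin d → ℝ) (x : Fin d → ℕ) :
    mProb d N p x = N ! * expWeight p x := by
  rw [mProb, expWeight_eq_div]
  ring

lemma sum_piAntidiag_prod_pow_div_factorial {ι : Type*} [DecidableEq ι] (s : Finset ι)
    (q : ι → ℝ) (c : ℕ) :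
    ∑ g ∈ piAntidiag s c, ∏ j ∈ s, q j ^ g j / ((g j)! : ℝ) = (∑ j ∈ s, q j) ^ c / c ! := by
  rw [sum_pow_eq_sum_piAntidiag, sum_div]
  refine sum_congr rfl fun g hg => ?_
  have hspec := Nat.multinomial_spec s g
  rw [(mem_piAntidiag.1 hg).1] at hspec
  rw [prod_div_distrib, eq_div_iff (by positivity), ← hspec]
  push_cast
  field_simp

lemma sum_fiberFinset_expWeight {ι κ : Type*} [Fintype ι] [DecidableEq ι] [Fintype κ]
    [DecidableEq κ] (σ : ι → κ) (q : ι → ℝ) (c : κ → ℕ) :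
    ∑ w ∈ fiberFinset σ c, expWeight q w = expWeight (fiberSum σ q) c := by
  have hfib : ∀ k, (fiberSum σ q k) ^ c k / ((c k)! : ℝ) =
      ∑ g ∈ piAntidiag (univ.filter (σ · = k)) (c k),
        ∏ j ∈ univ.filter (σ · = k), q j ^ g j / ((g j)! : ℝ) :=
    fun k => (sum_piAntidiag_prod_pow_div_factorial _ q (c k)).symm
  rw [expWeight, prod_congr rfl fun k _ => hfib k, prod_univ_sum]
  have mem_fib {G : κ → ι → ℕ} (hG : G ∈ Fintype.piFinset
      fun k => piAntidiag (univ.filter (σ · = k)) (c k)) (k : κ) :=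
    mem_piAntidiag.1 (Fintype.mem_piFinset.1 hG k)
  refine sum_nbij' (fun w k j => if σ j = k then w j else 0) (fun G j => G (σ j) j)
    (fun w hw => ?_) (fun G hG => ?_) (fun w _ => ?_) (fun G hG => ?_) (fun w _ => ?_)
  · refine Fintype.mem_piFinset.2 fun k => mem_piAntidiag.2 ⟨?_, fun j hj => ?_⟩
    · rw [sum_congr rfl fun j hj => if_pos (mem_filter.1 hj).2]
      exact congrFun (mem_fiberFinset.1 hw) k
    · exact mem_filter.2 ⟨mem_univ j, by_contra fun h => hj (if_neg h)⟩
  · refine mem_fiberFinset.2 (funext fun k => ?_)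
    rw [← (mem_fib hG k).1]
    exact sum_congr rfl fun j hj => congrArg (G · j) (mem_filter.1 hj).2
  · funext j
    simp
  · funext k j
    dsimp only
    split_ifs with h
    · rw [h]
    · by_contra hne
      exact h (mem_filter.1 ((mem_fib hG k).2 j (Ne.symm hne))).2
  · rw [expWeight, ← prod_fiberwise univ σ]
    refine prod_congr rfl fun k _ => prod_congr rfl fun j hj => ?_
    simp [(mem_filter.1 hj).2]

lemma expWeight_mul_prod_descFactorial {ι : Type*} [Fintype ι] (q : ι → ℝ) {x z : ι → ℕ}
    (h : z ≤ x) :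
    expWeight q x * ∏ i, ((x i).descFactorial (z i) : ℝ) =
      (∏ i, q i ^ z i) * expWeight q (x - z) := by
  simp only [expWeight, ← prod_mul_distrib]
  refine prod_congr rfl fun i _ => ?_
  have hfac : (((x i - z i)! : ℕ) : ℝ) * (x i).descFactorial (z i) = (x i)! := by
    exact_mod_cast Nat.factorial_mul_descFactorial (h i)
  rw [Pi.sub_apply, ← hfac, ← pow_sub_mul_pow (q i) (h i)]
  have : ((x i).descFactorial (z i) : ℝ) ≠ 0 := by
    exact_mod_cast (Nat.descFactorial_pos.2 (h i)).ne'
  field_simp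

lemma prod_descFactorial_eq_zero {ι : Type*} [Fintype ι] {x z : ι → ℕ} (h : ¬ z ≤ x) :
    ∏ i, ((x i).descFactorial (z i) : ℝ) = 0 := by
  obtain ⟨i, hi⟩ : ∃ i, x i < z i := by simpa [Pi.le_def] using h
  exact prod_eq_zero (mem_univ i) (by simp [Nat.descFactorial_eq_zero_iff_lt.2 hi])

lemma prod_fiberSum_pow_fiberSum_ne_zero {ι κ : Type*} [Fintype ι] [Fintype κ] [DecidableEq κ]
    (σ : ι → κ) {p : ι → ℝ} (hp : ∀ j, 0 < p j) (z : ι → ℕ) :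
    ∏ k, fiberSum σ p k ^ fiberSum σ z k ≠ 0 := by
  refine prod_ne_zero_iff.2 fun k _ => ?_
  rcases (univ.filter (σ · = k)).eq_empty_or_nonempty with h | h
  · simp [fiberSum, h]
  · exact pow_ne_zero _ (sum_pos (fun j _ => hp j) h).ne'

lemma sum_fiberFinset_expWeight_mul_prod_descFactorial {ι κ : Type*} [Fintype ι]
    [DecidableEq ι] [Fintype κ] [DecidableEq κ] (σ : ι → κ) {p : ι → ℝ} (hp : ∀ j, 0 < p j)
    (a : κ → ℕ) (z : ι → ℕ) :
    ∑ x ∈ fiberFinset σ a, expWeight p x * ∏ j, ((x j).descFactorial (z j) : ℝ) =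
      expWeight (fiberSum σ p) a * (∏ k, ((a k).descFactorial (fiberSum σ z k) : ℝ)) *
        (∏ j, p j ^ z j) / ∏ k, fiberSum σ p k ^ fiberSum σ z k := by
  by_cases hs : fiberSum σ z ≤ a
  · rw [expWeight_mul_prod_descFactorial _ hs, mul_assoc,
      mul_div_cancel_left₀ _ (prod_fiberSum_pow_fiberSum_ne_zero σ hp z),
      ← sum_fiberFinset_expWeight, sum_mul]
    symm
    refine sum_of_injOn (· + z) (add_left_injective z).injOn (fun w hw => ?_) (fun x hx hxz => ?_)
      (fun w _ => ?_)
    · rw [mem_coe, mem_fiberFinset, fiberSum_add, mem_fiberFinset.1 hw, tsub_add_cancel_of_le hs]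
    · have hzx : ¬ z ≤ x := fun hzx => hxz ⟨x - z,
        by rw [mem_coe, mem_fiberFinset, fiberSum_tsub σ hzx, mem_fiberFinset.1 hx],
        tsub_add_cancel_of_le hzx⟩
      rw [prod_descFactorial_eq_zero hzx, mul_zero]
    · rw [expWeight_mul_prod_descFactorial _ le_add_self, add_tsub_cancel_right, mul_comm]
  · rw [prod_descFactorial_eq_zero hs, mul_zero, zero_mul, zero_div]
    refine sum_eq_zero fun x hx => ?_
    have hzx : ¬ z ≤ x := fun hzx => hs (mem_fiberFinset.1 hx ▸ fiberSum_mono σ hzx)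
    rw [prod_descFactorial_eq_zero hzx, mul_zero]

lemma mem_multiSupp {d N : ℕ} {x : Fin d → ℕ} : x ∈ multiSupp d N ↔ ∑ i, x i = N :=
  mem_filter.trans ⟨And.right, fun h =>
    ⟨mem_Iic.2 fun j => h ▸ single_le_sum (fun _ _ => Nat.zero_le _) (mem_univ j), h⟩⟩

lemma multiSupp_filter_fiberSum_eq {d d' N : ℕ} (σ : Fin d → Fin d') {a : Fin d' → ℕ}
    (ha : ∑ k, a k = N) :
    (multiSupp d N).filter (fun x => fiberSum σ x = a) = fiberFinset σ a := by
  ext x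
  rw [mem_filter, mem_multiSupp, mem_fiberFinset, and_iff_right_iff_imp]
  intro h
  rw [← sum_fiberSum σ, h, ha]

def simplexLE {ι : Type*} [Fintype ι] [DecidableEq ι] (n : ℕ) : Finset (ι → ℕ) :=
  (Iic fun _ => n).filter (fun z => ∑ i, z i ≤ n)

lemma mem_simplexLE {ι : Type*} [Fintype ι] [DecidableEq ι] {n : ℕ} {z : ι → ℕ} :
    z ∈ simplexLE n ↔ ∑ i, z i ≤ n :=
  mem_filter.trans ⟨And.right, fun h =>
    ⟨mem_Iic.2 fun j => (single_le_sum (fun _ _ => Nat.zero_le _) (mem_univ j)).trans h, h⟩⟩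

lemma sum_simplexLE_mul_expWeight {ι κ : Type*} [Fintype ι] [DecidableEq ι] [Fintype κ]
    [DecidableEq κ] (σ : ι → κ) (n : ℕ) (f : (κ → ℕ) → ℝ) (q : ι → ℝ) :
    ∑ z ∈ simplexLE n, f (fiberSum σ z) * expWeight q z =
      ∑ s ∈ simplexLE n, f s * expWeight (fiberSum σ q) s := by
  rw [← sum_fiberwise_of_maps_to (g := fiberSum σ) (t := simplexLE n)
    fun z hz => mem_simplexLE.2 (sum_fiberSum σ z ▸ mem_simplexLE.1 hz)]
  refine sum_congr rfl fun s hs => ?_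
  have hfiber : (simplexLE n).filter (fun z => fiberSum σ z = s) = fiberFinset σ s := by
    ext z
    rw [mem_filter, mem_simplexLE, mem_fiberFinset, and_iff_right_iff_imp]
    intro h
    rw [← sum_fiberSum σ, h]
    exact mem_simplexLE.1 hs
  rw [hfiber, ← sum_fiberFinset_expWeight, mul_sum]
  exact sum_congr rfl fun z hz => by rw [mem_fiberFinset.1 hz]

lemma sum_fiberFinset_mProb_mul_prod_descFactorial {d d' : ℕ} (N : ℕ) (σ : Fin d → Fin d')
    {p : Fin d → ℝ} (hp : ∀ j, 0 < p j) (a : Fin d' → ℕ) (z : Fin d → ℕ) :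
    ∑ x ∈ fiberFinset σ a, mProb d N p x * ∏ j, ((x j).descFactorial (z j) : ℝ) =
      mProb d' N (fiberSum σ p) a * (∏ k, ((a k).descFactorial (fiberSum σ z k) : ℝ)) *
        (∏ j, p j ^ z j) / ∏ k, fiberSum σ p k ^ fiberSum σ z k := by
  simp only [mProb_eq_factorial_mul_expWeight, mul_assoc, ← mul_sum,
    sum_fiberFinset_expWeight_mul_prod_descFactorial σ hp]
  ring

noncomputable def kernelCoeff (N n k : ℕ) : ℝ :=
  N.choose k * (N - k).choose (n - k) * (-1) ^ (n - k) * k ! / (N.descFactorial k : ℝ) ^ 2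

lemma kernelQ_eq_sum_simplexLE {d : ℕ} (N : ℕ) (p : Fin d → ℝ) (n : ℕ) (x y : Fin d → ℕ) :
    kernelQ d N p n x y = ∑ z ∈ simplexLE n, kernelCoeff N n (∑ i, z i) *
      (∏ i, ((x i).descFactorial (z i) : ℝ)) * (∏ i, ((y i).descFactorial (z i) : ℝ)) /
        ((∏ i, ((z i)! : ℝ)) * ∏ i, p i ^ z i) := by
  have hterm : ∀ z : Fin d → ℕ,
      (N.choose (∑ i, z i) : ℝ) * ((N - ∑ i, z i).choose (n - ∑ i, z i) : ℝ) *
        (-1 : ℝ) ^ (n - ∑ i, z i) * (((∑ i, z i)! : ℝ) / ∏ i, ((z i)! : ℝ)) *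
        (∏ i, ((x i).descFactorial (z i) : ℝ) * ((y i).descFactorial (z i) : ℝ) / p i ^ z i) /
        ((N.descFactorial (∑ i, z i) : ℝ)) ^ 2 =
      kernelCoeff N n (∑ i, z i) * (∏ i, ((x i).descFactorial (z i) : ℝ)) *
        (∏ i, ((y i).descFactorial (z i) : ℝ)) / ((∏ i, ((z i)! : ℝ)) * ∏ i, p i ^ z i) := by
    intro z
    rw [kernelCoeff, prod_div_distrib, prod_mul_distrib]
    ring
  rw [kernelQ, sum_congr rfl fun z _ => hterm z]
  refine sum_subset (fun z hz => mem_simplexLE.2 (mem_filter.1 hz).2) fun z hz hzxy => ?_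
  have hz : ¬ (z ≤ x ∧ z ≤ y) := fun h =>
    hzxy (mem_filter.2 ⟨mem_Iic.2 (le_inf h.1 h.2), mem_simplexLE.1 hz⟩)
  rcases not_and_or.1 hz with h | h <;> simp [prod_descFactorial_eq_zero h]

lemma kernelQ_eq_sum_expWeight {d : ℕ} (N : ℕ) (p : Fin d → ℝ) (n : ℕ) (x y : Fin d → ℕ) :
    kernelQ d N p n x y = ∑ z ∈ simplexLE n, kernelCoeff N n (∑ i, z i) *
      (∏ i, ((x i).descFactorial (z i) : ℝ)) * (∏ i, ((y i).descFactorial (z i) : ℝ)) /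
        (∏ i, p i ^ z i) ^ 2 * expWeight p z := by
  rw [kernelQ_eq_sum_simplexLE]
  refine sum_congr rfl fun z _ => ?_
  rw [expWeight_eq_div]
  by_cases hz : ∏ i, p i ^ z i = 0
  · simp [hz]
  · field_simp

lemma sum_sum_mProb_mul_kernelQ {d : ℕ} (N : ℕ) (p : Fin d → ℝ) (n : ℕ)
    (S T : Finset (Fin d → ℕ)) :
    ∑ x ∈ S, ∑ y ∈ T, mProb d N p x * mProb d N p y * kernelQ d N p n x y =
      ∑ z ∈ simplexLE n, kernelCoeff N n (∑ i, z i) *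
        (∑ x ∈ S, mProb d N p x * ∏ i, ((x i).descFactorial (z i) : ℝ)) *
        (∑ y ∈ T, mProb d N p y * ∏ i, ((y i).descFactorial (z i) : ℝ)) /
          ((∏ i, ((z i)! : ℝ)) * ∏ i, p i ^ z i) := by
  simp only [kernelQ_eq_sum_simplexLE, mul_sum, sum_mul, sum_div]
  rw [sum_comm, sum_congr rfl fun y _ => sum_comm, sum_comm]
  exact sum_congr rfl fun z _ => sum_congr rfl fun y _ => sum_congr rfl fun x _ => by ring

theorem kernelQ_grouping_general (d d' : ℕ)
    (p : Fin d → ℝ) (hp : ∀ j, 0 < p j)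
    (N : ℕ) (σ : Fin d → Fin d')
    (p' : Fin d' → ℝ) (hp' : ∀ k, p' k = ∑ j ∈ Finset.univ.filter (fun j => σ j = k), p j)
    (a b : Fin d' → ℕ) (ha : ∑ k, a k = N) (hb : ∑ k, b k = N)
    (n : ℕ) :
    ∑ x ∈ (multiSupp d N).filter
        (fun x => (fun k => ∑ j ∈ Finset.univ.filter (fun j => σ j = k), x j) = a),
      ∑ y ∈ (multiSupp d N).filter
        (fun y => (fun k => ∑ j ∈ Finset.univ.filter (fun j => σ j = k), y j) = b),
        mProb d N p x * mProb d N p y * kernelQ d N p n x y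
      = mProb d' N p' a * mProb d' N p' b * kernelQ d' N p' n a b := by
  obtain rfl : p' = fiberSum σ p := funext hp'
  change ∑ x ∈ (multiSupp d N).filter (fun x => fiberSum σ x = a),
    ∑ y ∈ (multiSupp d N).filter (fun y => fiberSum σ y = b), _ = _
  rw [multiSupp_filter_fiberSum_eq σ ha, multiSupp_filter_fiberSum_eq σ hb,
    sum_sum_mProb_mul_kernelQ, kernelQ_eq_sum_expWeight, mul_sum]
  set m := mProb d' N (fiberSum σ p) a * mProb d' N (fiberSum σ p) b
  set G : (Fin d' → ℕ) → ℝ := fun s => kernelCoeff N n (∑ k, s k) *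
    (∏ k, ((a k).descFactorial (s k) : ℝ)) * (∏ k, ((b k).descFactorial (s k) : ℝ)) /
      (∏ k, fiberSum σ p k ^ s k) ^ 2
  calc
    _ = ∑ z ∈ simplexLE n, m * G (fiberSum σ z) * expWeight p z := by
      refine sum_congr rfl fun z _ => ?_
      have hz : ∏ i, p i ^ z i ≠ 0 := prod_ne_zero_iff.2 fun i _ => pow_ne_zero _ (hp i).ne'
      have hs := prod_fiberSum_pow_fiberSum_ne_zero σ hp z
      rw [sum_fiberFinset_mProb_mul_prod_descFactorial N σ hp,
        sum_fiberFinset_mProb_mul_prod_descFactorial N σ hp, expWeight_eq_div p z]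
      simp only [m, G, sum_fiberSum]
      field_simp
    _ = ∑ s ∈ simplexLE n, m * G s * expWeight (fiberSum σ p) s :=
      sum_simplexLE_mul_expWeight σ n (fun s => m * G s) p
    _ = _ := sum_congr rfl fun s _ => by ring

/-- Grouping variables: the conditional expectation of `Q_n(X,Y;N,p)` given the grouped counts
equals the reproducing kernel polynomial of the grouped multinomial. -/
theorem kernelQ_grouping (d d' : ℕ) (hd' : 2 ≤ d') (hdd : d' < d)
    (p : Fin d → ℝ) (hp : ∀ j, 0 < p j) (hsum : ∑ j, p j = 1)
    (N : ℕ) (hN : 0 < N) (σ : Fin d → Fin d') (hσ : Function.Surjective σ)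
    (p' : Fin d' → ℝ) (hp' : ∀ k, p' k = ∑ j ∈ Finset.univ.filter (fun j => σ j = k), p j)
    (a b : Fin d' → ℕ) (ha : ∑ k, a k = N) (hb : ∑ k, b k = N)
    (n : ℕ) (hn : n ≤ N) :
    ∑ x ∈ (multiSupp d N).filter
        (fun x => (fun k => ∑ j ∈ Finset.univ.filter (fun j => σ j = k), x j) = a),
      ∑ y ∈ (multiSupp d N).filter
        (fun y => (fun k => ∑ j ∈ Finset.univ.filter (fun j => σ j = k), y j) = b),
        mProb d N p x * mProb d N p y * kernelQ d N p n x y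
      = mProb d' N p' a * mProb d' N p' b * kernelQ d' N p' n a b :=
  kernelQ_grouping_general d d' p hp N σ p' hp' a b ha hb n
end

section
/- For every μ ∈ (0,∞)^d, all x, y ∈ ℕ^d, and every real ρ, the series Σ_{n=1}^∞ ρ^n Q_n^P(x,y;μ) converges absolutely and 1 + Σ_{n=1}^∞ ρ^n Q_n^P(x,y;μ) = e^{|μ|ρ} Σ_{z∈ℕ^d: z ≤ x, z ≤ y} ρ^{|z|} (1−ρ)^{|x|+|y|−2|z|} ∏_{i=1}^d (x_i)_{[z_i]} (y_i)_{[z_i]} / (μ_i^{z_i} z_i!) (the Poisson kernel identity for the reproducing kernel polynomials on the product Poisson distribution). -/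
open Finset

/-- Poisson–Charlier polynomial `C_n(x;λ) = Σ_{k=0}^n C(n,k) (−1/λ)^k x_{[k]}`. -/
noncomputable def charlier (n x : ℕ) (lam : ℝ) : ℝ :=
  ∑ k ∈ Finset.range (n + 1), (n.choose k : ℝ) * (-1 / lam) ^ k * (x.descFactorial k : ℝ)

/-- Reproducing kernel polynomial `Q_n^P(x,y;μ)` on the product Poisson distribution. -/
noncomputable def kernelQP (d n : ℕ) (mu : Fin d → ℝ) (x y : Fin d → ℕ) : ℝ :=
  ∑ z ∈ (Finset.Iic (x ⊓ y)).filter (fun z => ∑ i, z i ≤ n),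
    ((∑ i, mu i) ^ (n - ∑ i, z i) / ((n - ∑ i, z i).factorial : ℝ)) *
      charlier (n - ∑ i, z i) ((∑ i, x i) + (∑ i, y i) - 2 * ∑ i, z i) (∑ i, mu i) *
      ∏ i, ((x i).descFactorial (z i) : ℝ) * ((y i).descFactorial (z i) : ℝ) /
        ((mu i) ^ (z i) * ((z i).factorial : ℝ))

/-!
Multiplying `Q_n^P` by `ρⁿ` and summing over `n`, each `z` contributes
`ρ^{|z|} w_z Σ_j (|μ|ρ)^j/j! C_j(N_z; |μ|)` (with `w_z = kernelWeight mu x y z` and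
`N_z = |x| + |y| - 2|z|`), a shifted copy of the Charlier generating function
`Σ_j u^j/j! C_j(N; λ) = e^u (1 - u/λ)^N` at `u = |μ|ρ`. That generating function follows by
expanding `C_j` and using `Σ_j u^j/j! C(j,k) = u^k/k! e^u`; the binomial theorem then collapses
the sum over `k`.
-/

open Nat

theorem hasSum_ite_le_sub_iff {M : Type*} [AddCommMonoid M] [TopologicalSpace M] {f : ℕ → M}
    {a : M} (s : ℕ) : HasSum (fun n => if s ≤ n then f (n - s) else 0) a ↔ HasSum f a := by
  rw [← (add_left_injective s).hasSum_iff]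
  · simp [Function.comp_def]
  · exact fun n hn => if_neg fun hsn => hn ⟨n - s, Nat.sub_add_cancel hsn⟩

theorem Real.hasSum_pow_div_factorial_mul_choose (u : ℝ) (k : ℕ) :
    HasSum (fun j => u ^ j / j ! * (j.choose k : ℝ)) (u ^ k / k ! * Real.exp u) := by
  have hexp : HasSum (fun m => u ^ m / m !) (Real.exp u) := by
    rw [Real.exp_eq_exp_ℝ]
    exact NormedSpace.expSeries_div_hasSum_exp u
  refine ((hasSum_ite_le_sub_iff k).mpr (hexp.mul_left (u ^ k / k !))).congr_fun fun j => ?_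
  split_ifs with hkj
  · obtain ⟨m, rfl⟩ := Nat.exists_eq_add_of_le' hkj
    rw [Nat.add_sub_cancel, add_comm m k, Nat.cast_add_choose, pow_add]
    field_simp
  · simp [Nat.choose_eq_zero_of_lt (not_le.mp hkj)]

theorem charlier_eq_sum_range (j N : ℕ) (lam : ℝ) :
    charlier j N lam
      = ∑ k ∈ range (N + 1), (j.choose k : ℝ) * (-1 / lam) ^ k * (N.descFactorial k : ℝ) := by
  rcases le_total j N with h | h
  · refine (eventually_constant_sum (fun k hk => ?_) (by omega)).symm
    simp [Nat.choose_eq_zero_of_lt (show j < k by omega)]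
  · refine eventually_constant_sum (fun k hk => ?_) (by omega)
    simp [Nat.descFactorial_eq_zero_iff_lt.mpr (show N < k by omega)]

theorem hasSum_pow_div_factorial_mul_charlier (u lam : ℝ) (N : ℕ) :
    HasSum (fun j => u ^ j / j ! * charlier j N lam) (Real.exp u * (1 - u / lam) ^ N) := by
  have hterm : ∀ k ∈ range (N + 1),
      HasSum (fun j => (-1 / lam) ^ k * N.descFactorial k * (u ^ j / j ! * (j.choose k : ℝ)))
        ((-1 / lam) ^ k * N.descFactorial k * (u ^ k / k ! * Real.exp u)) :=
    fun k _ => (Real.hasSum_pow_div_factorial_mul_choose u k).mul_left _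
  convert hasSum_sum hterm using 1
  · funext j
    rw [charlier_eq_sum_range, mul_sum]
    exact sum_congr rfl fun k _ => by ring
  · rw [sub_eq_neg_add, add_pow, mul_sum]
    refine sum_congr rfl fun k _ => ?_
    rw [Nat.descFactorial_eq_factorial_mul_choose]
    push_cast
    field_simp
    ring

section Kernel

variable {d : ℕ} (mu : Fin d → ℝ) (x y : Fin d → ℕ)

noncomputable def kernelWeight (z : Fin d → ℕ) : ℝ :=
  ∏ i, ((x i).descFactorial (z i) : ℝ) * ((y i).descFactorial (z i) : ℝ) /
    ((mu i) ^ (z i) * ((z i).factorial : ℝ))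

theorem pow_mul_kernelQP_eq_sum (n : ℕ) (ρ : ℝ) :
    ρ ^ n * kernelQP d n mu x y = ∑ z ∈ Iic (x ⊓ y),
      if ∑ i, z i ≤ n then
        ρ ^ (∑ i, z i) * kernelWeight mu x y z *
          (((∑ i, mu i) * ρ) ^ (n - ∑ i, z i) / (n - ∑ i, z i)! *
            charlier (n - ∑ i, z i) ((∑ i, x i) + (∑ i, y i) - 2 * ∑ i, z i) (∑ i, mu i))
      else 0 := by
  rw [kernelQP, sum_filter, mul_sum]
  refine sum_congr rfl fun z _ => ?_
  split_ifs with hzn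
  · rw [kernelWeight, ← Nat.add_sub_cancel' hzn, pow_add, Nat.add_sub_cancel_left]
    ring
  · rw [mul_zero]

variable {mu}

theorem hasSum_pow_mul_kernelQP (hmu : ∀ i, 0 < mu i) (ρ : ℝ) :
    HasSum (fun n => ρ ^ n * kernelQP d n mu x y)
      (Real.exp ((∑ i, mu i) * ρ) * ∑ z ∈ Iic (x ⊓ y),
        ρ ^ (∑ i, z i) * (1 - ρ) ^ ((∑ i, x i) + (∑ i, y i) - 2 * ∑ i, z i) *
          kernelWeight mu x y z) := by
  set S := ∑ i, mu i
  have hz : ∀ z ∈ Iic (x ⊓ y), HasSum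
      (fun n => if ∑ i, z i ≤ n then
        ρ ^ (∑ i, z i) * kernelWeight mu x y z *
          ((S * ρ) ^ (n - ∑ i, z i) / (n - ∑ i, z i)! *
            charlier (n - ∑ i, z i) ((∑ i, x i) + (∑ i, y i) - 2 * ∑ i, z i) S)
      else 0)
      (ρ ^ (∑ i, z i) * kernelWeight mu x y z *
        (Real.exp (S * ρ) * (1 - S * ρ / S) ^ ((∑ i, x i) + (∑ i, y i) - 2 * ∑ i, z i))) :=
    fun z _ => (hasSum_ite_le_sub_iff (f := fun j => ρ ^ (∑ i, z i) * kernelWeight mu x y z *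
      ((S * ρ) ^ j / j ! * charlier j ((∑ i, x i) + (∑ i, y i) - 2 * ∑ i, z i) S)) _).mpr <|
        (hasSum_pow_div_factorial_mul_charlier _ _ _).mul_left _
  have hρ : ∀ z : Fin d → ℕ, (1 - S * ρ / S) ^ ((∑ i, x i) + (∑ i, y i) - 2 * ∑ i, z i)
      = (1 - ρ) ^ ((∑ i, x i) + (∑ i, y i) - 2 * ∑ i, z i) := by
    rcases isEmpty_or_nonempty (Fin d) with hd | hd
    -- `S * ρ / S = 0 / 0 = 0` here, but the exponent vanishes too
    · simp
    · intro z
      rw [mul_div_cancel_left₀ ρ (sum_pos (fun i _ => hmu i) univ_nonempty).ne']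
  rw [funext (pow_mul_kernelQP_eq_sum mu x y · ρ)]
  convert hasSum_sum hz using 1
  rw [mul_sum]
  refine sum_congr rfl fun z _ => ?_
  rw [hρ]
  ring

end Kernel

theorem kernelQP_zero (d : ℕ) (mu : Fin d → ℝ) (x y : Fin d → ℕ) : kernelQP d 0 mu x y = 1 := by
  have hzero : (Iic (x ⊓ y)).filter (fun z => ∑ i, z i ≤ 0) = {0} := by
    ext z
    simp only [mem_filter, mem_Iic, nonpos_iff_eq_zero, sum_eq_zero_iff, mem_univ,
      true_implies, mem_singleton, funext_iff]
    exact ⟨fun h => h.2, fun h => ⟨fun i => by simp [h i], h⟩⟩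
  rw [kernelQP, hzero, sum_singleton]
  simp [charlier]

/-- The Poisson kernel identity for the reproducing kernel polynomials on the
product Poisson distribution: the series converges absolutely and sums to the
stated closed form. -/
theorem poisson_kernel_product_poisson (d : ℕ) (mu : Fin d → ℝ) (hmu : ∀ i, 0 < mu i)
    (x y : Fin d → ℕ) (ρ : ℝ) :
    Summable (fun n : ℕ => |ρ ^ (n + 1) * kernelQP d (n + 1) mu x y|) ∧
    1 + ∑' n : ℕ, ρ ^ (n + 1) * kernelQP d (n + 1) mu x y
      = Real.exp ((∑ i, mu i) * ρ) *
          ∑ z ∈ Finset.Iic (x ⊓ y),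
            ρ ^ (∑ i, z i) * (1 - ρ) ^ ((∑ i, x i) + (∑ i, y i) - 2 * ∑ i, z i) *
            ∏ i, ((x i).descFactorial (z i) : ℝ) * ((y i).descFactorial (z i) : ℝ) /
              ((mu i) ^ (z i) * ((z i).factorial : ℝ)) := by
  have htail := (hasSum_nat_add_iff' 1).mpr (hasSum_pow_mul_kernelQP x y hmu ρ)
  simp only [range_one, sum_singleton, pow_zero, kernelQP_zero, one_mul] at htail
  exact ⟨htail.summable.abs, by rw [htail.tsum_eq, add_sub_cancel]; rfl⟩
end
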